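/- For every extensional digraph G, every n < ω, and every x ∈ M_n(G), there exists P ∈ M_{n+2}(G) such that for all z ∈ M_ω(G), z E_ω P if and only if every E_ω-predecessor of z is an E_ω-predecessor of x (the Power Set axiom holds in 𝕍_ω(G)). -/
import Mathlib


/-- An extensional digraph: a set `M` (of ZF-sets) together with a binary relation
`E` on `M` such that any two elements of `M` with the same `E`-predecessors are
equal. -/
structure ExtDigraph where
  /-- The carrier set. -/
  M : ZFSet
  /-- The edge relation. -/
  E : ZFSet → ZFSet → Prop
  dom_left : ∀ x y, E x y → x ∈ M
  dom_right : ∀ x y, E x y → y ∈ M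
  ext : ∀ x y, x ∈ M → y ∈ M → (∀ z, E z x ↔ E z y) → x = y

namespace ExtDigraph

/-- The von Neumann natural number `n` as a ZF-set, used as a tag. -/
def tag : ℕ → ZFSet
  | 0 => ∅
  | n + 1 => insert (tag n) (tag n)

/-- The deficiency of a digraph `(M, E)`: the collection of subsets of `M` which are
not the `E`-predecessor set of any element of `M`. -/
def defic (M : ZFSet) (E : ZFSet → ZFSet → Prop) : ZFSet :=
  (ZFSet.powerset M).sep fun X => ¬ ∃ y, y ∈ M ∧ ∀ z, z ∈ M → (z ∈ X ↔ E z y)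

/-- The digraphs `𝕍_n(G) = (M_n, E_n)`, defined recursively:
`M_0 = {0} × M` with `(0,x) E_0 (0,y)` iff `x E y`; and
`M_{n+1} = M_n ∪ ({n+1} × D(𝕍_n))` where `E_{n+1}` adds the pairs
`(z, (n+1, X))` for `z ∈ X ∈ D(𝕍_n)`. -/
def lvl (G : ExtDigraph) : ℕ → ZFSet × (ZFSet → ZFSet → Prop)
  | 0 =>
    (ZFSet.prod {tag 0} G.M,
      fun a b => ∃ x y, G.E x y ∧ a = ZFSet.pair (tag 0) x ∧ b = ZFSet.pair (tag 0) y)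
  | n + 1 =>
    let p := lvl G n
    (p.1 ∪ ZFSet.prod {tag (n + 1)} (defic p.1 p.2),
      fun a b => p.2 a b ∨
        ∃ X, X ∈ defic p.1 p.2 ∧ b = ZFSet.pair (tag (n + 1)) X ∧ a ∈ X)

/-- The carrier `M_n(G)` of `𝕍_n(G)`. -/
def Mlvl (G : ExtDigraph) (n : ℕ) : ZFSet := (lvl G n).1

/-- The edge relation `E_n(G)` of `𝕍_n(G)`. -/
def Elvl (G : ExtDigraph) (n : ℕ) : ZFSet → ZFSet → Prop := (lvl G n).2

/-- Membership in `M_ω(G) = ⋃_{n<ω} M_n(G)`. -/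
def MemMomega (G : ExtDigraph) (x : ZFSet) : Prop := ∃ n, x ∈ Mlvl G n

/-- The edge relation `E_ω(G) = ⋃_{n<ω} E_n(G)` of `𝕍_ω(G)`. -/
def Eomega (G : ExtDigraph) (a b : ZFSet) : Prop := ∃ n, Elvl G n a b

/-- The carrier of `𝕍_m(G)` for `m ≤ ω` (with `⊤` standing for `ω`), as a class. -/
def MlvlI (G : ExtDigraph) : ℕ∞ → Set ZFSet :=
  WithTop.recTopCoe {x | MemMomega G x} fun n => {x | x ∈ Mlvl G n}

/-- The edge relation of `𝕍_m(G)` for `m ≤ ω` (with `⊤` standing for `ω`). -/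
def ElvlI (G : ExtDigraph) : ℕ∞ → ZFSet → ZFSet → Prop :=
  WithTop.recTopCoe (Eomega G) fun n => Elvl G n

end ExtDigraph


namespace ExtDigraph

theorem tag_mem_tag : ∀ {m k : ℕ}, m < k → tag m ∈ tag k := by
  intro m k
  induction k with
  | zero => omega
  | succ k ih =>
    intro h
    rcases Nat.lt_succ_iff_lt_or_eq.1 h with h' | h'
    · exact ZFSet.mem_insert_of_mem _ (ih h')
    · subst h'; exact ZFSet.mem_insert _ _

theorem tag_injective : Function.Injective tag := by
  intro m k h
  by_contra hne
  rcases Nat.lt_or_ge m k with hl | hl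
  · have := tag_mem_tag hl
    rw [h] at this
    exact ZFSet.mem_irrefl _ this
  · have := tag_mem_tag (by omega : k < m)
    rw [h] at this
    exact ZFSet.mem_irrefl _ this

variable (G : ExtDigraph)

theorem Mlvl_succ (n : ℕ) : Mlvl G (n + 1) =
    Mlvl G n ∪ ZFSet.prod {tag (n + 1)} (defic (Mlvl G n) (Elvl G n)) := rfl

theorem Elvl_succ (n : ℕ) (a b : ZFSet) : Elvl G (n + 1) a b ↔
    Elvl G n a b ∨ ∃ X, X ∈ defic (Mlvl G n) (Elvl G n) ∧
      b = ZFSet.pair (tag (n + 1)) X ∧ a ∈ X := Iff.rfl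

theorem Mlvl_mono {m k : ℕ} (h : m ≤ k) : Mlvl G m ⊆ Mlvl G k := by
  induction k with
  | zero =>
    have : m = 0 := by omega
    subst this; exact fun z hz => hz
  | succ k ih =>
    rcases Nat.le_succ_iff.1 h with h' | h'
    · exact fun z hz => (Mlvl_succ G k) ▸ ZFSet.mem_union.2 (Or.inl (ih h' hz))
    · subst h'; exact fun z hz => hz

theorem Elvl_mono {m k : ℕ} (h : m ≤ k) {a b : ZFSet} (hab : Elvl G m a b) :
    Elvl G k a b := by
  induction k with
  | zero =>
    have : m = 0 := by omega
    subst this; exact hab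
  | succ k ih =>
    rcases Nat.le_succ_iff.1 h with h' | h'
    · exact Or.inl (ih h')
    · subst h'; exact hab

theorem Elvl_dom {m : ℕ} {a b : ZFSet} (hab : Elvl G m a b) :
    a ∈ Mlvl G m ∧ b ∈ Mlvl G m := by
  induction m with
  | zero =>
    obtain ⟨x, y, hE, ha, hb⟩ := hab
    subst ha; subst hb
    exact ⟨ZFSet.mem_prod.2 ⟨tag 0, ZFSet.mem_singleton.2 rfl, x, G.dom_left x y hE, rfl⟩,
      ZFSet.mem_prod.2 ⟨tag 0, ZFSet.mem_singleton.2 rfl, y, G.dom_right x y hE, rfl⟩⟩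
  | succ m ih =>
    rcases hab with h | ⟨X, hX, hb, haX⟩
    · obtain ⟨h1, h2⟩ := ih h
      exact ⟨Mlvl_mono G (Nat.le_succ m) h1, Mlvl_mono G (Nat.le_succ m) h2⟩
    · constructor
      · have hXM : X ⊆ Mlvl G m := ZFSet.mem_powerset.1 (ZFSet.mem_sep.1 hX).1
        exact Mlvl_mono G (Nat.le_succ m) (hXM haX)
      · subst hb
        exact ZFSet.mem_union.2 (Or.inr (ZFSet.mem_prod.2
          ⟨_, ZFSet.mem_singleton.2 rfl, _, hX, rfl⟩))

theorem Mlvl_shape {m : ℕ} {y : ZFSet} (hy : y ∈ Mlvl G m) :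
    (∃ u, u ∈ G.M ∧ y = ZFSet.pair (tag 0) u) ∨
    (∃ k X, k + 1 ≤ m ∧ X ∈ defic (Mlvl G k) (Elvl G k) ∧
      y = ZFSet.pair (tag (k + 1)) X) := by
  induction m with
  | zero =>
    obtain ⟨a, ha, b, hb, hy⟩ := ZFSet.mem_prod.1 hy
    exact Or.inl ⟨b, hb, by rw [hy, ZFSet.mem_singleton.1 ha]⟩
  | succ m ih =>
    rcases ZFSet.mem_union.1 hy with h | h
    · rcases ih h with h' | ⟨k, X, hk, hX, hy'⟩
      · exact Or.inl h'
      · exact Or.inr ⟨k, X, by omega, hX, hy'⟩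
    · obtain ⟨a, ha, b, hb, hy'⟩ := ZFSet.mem_prod.1 h
      exact Or.inr ⟨m, b, le_refl _, hb, by rw [hy', ZFSet.mem_singleton.1 ha]⟩

theorem not_new_tag {m : ℕ} {y : ZFSet} (hy : y ∈ Mlvl G m) (X : ZFSet) :
    y ≠ ZFSet.pair (tag (m + 1)) X := by
  intro h
  rcases Mlvl_shape G hy with ⟨u, _, hy'⟩ | ⟨k, X', hk, _, hy'⟩
  · rw [hy'] at h
    exact absurd (tag_injective (ZFSet.pair_injective h).1) (by omega)
  · rw [hy'] at h
    exact absurd (tag_injective (ZFSet.pair_injective h).1) (by omega)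

theorem Elvl_stab {m k : ℕ} (h : m ≤ k) {y : ZFSet} (hy : y ∈ Mlvl G m) (z : ZFSet) :
    Elvl G k z y ↔ Elvl G m z y := by
  induction k with
  | zero =>
    have : m = 0 := by omega
    subst this; rfl
  | succ k ih =>
    rcases Nat.le_succ_iff.1 h with h' | h'
    · rw [← ih h']
      constructor
      · rintro (hE | ⟨X, hX, hb, haX⟩)
        · exact hE
        · exact absurd hb (not_new_tag G (Mlvl_mono G h' hy) X)
      · exact Or.inl
    · subst h'; rfl

theorem Eomega_iff_Elvl {m : ℕ} {y : ZFSet} (hy : y ∈ Mlvl G m) (z : ZFSet) :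
    Eomega G z y ↔ Elvl G m z y := by
  constructor
  · rintro ⟨j, hj⟩
    rcases Nat.le_total j m with h | h
    · exact Elvl_mono G h hj
    · exact (Elvl_stab G h hy z).1 hj
  · exact fun h => ⟨m, h⟩

theorem pred_new {k : ℕ} {X : ZFSet} (hX : X ∈ defic (Mlvl G k) (Elvl G k))
    (z : ZFSet) : Eomega G z (ZFSet.pair (tag (k + 1)) X) ↔ z ∈ X := by
  have hmem : ZFSet.pair (tag (k + 1)) X ∈ Mlvl G (k + 1) :=
    ZFSet.mem_union.2 (Or.inr (ZFSet.mem_prod.2 ⟨_, ZFSet.mem_singleton.2 rfl, _, hX, rfl⟩))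
  rw [Eomega_iff_Elvl G hmem]
  constructor
  · rintro (hE | ⟨X', _, hb, haX⟩)
    · exact absurd rfl (not_new_tag G (Elvl_dom G hE).2 X)
    · rwa [(ZFSet.pair_injective hb).2]
  · exact fun h => Or.inr ⟨X, hX, rfl, h⟩

theorem not_represented {k : ℕ} {y X : ZFSet} (hy : y ∈ Mlvl G k)
    (hX : X ∈ defic (Mlvl G k) (Elvl G k)) :
    ¬ ∀ z, (Eomega G z y ↔ z ∈ X) := by
  intro h
  refine (ZFSet.mem_sep.1 hX).2 ⟨y, hy, fun z _ => ?_⟩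
  rw [← h z, Eomega_iff_Elvl G hy]

theorem ext_omega {y₁ y₂ : ZFSet} (h₁ : MemMomega G y₁) (h₂ : MemMomega G y₂)
    (h : ∀ z, Eomega G z y₁ ↔ Eomega G z y₂) : y₁ = y₂ := by
  obtain ⟨m₁, hm₁⟩ := h₁
  obtain ⟨m₂, hm₂⟩ := h₂
  have key : ∀ {j : ℕ} {X u : ZFSet}, X ∈ defic (Mlvl G j) (Elvl G j) →
      (∃ m, u ∈ Mlvl G m) → (∀ z, (Eomega G z u ↔ z ∈ X)) →
      u = ZFSet.pair (tag (j + 1)) X := by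
    rintro j X u hX ⟨m, hm⟩ hpred
    rcases Nat.lt_or_ge j m with hjm | hjm
    · rcases Mlvl_shape G hm with ⟨v, hv, hu⟩ | ⟨k, X', hk, hX', hu⟩
      · have h0 : u ∈ Mlvl G 0 := by
          rw [hu]
          exact ZFSet.mem_prod.2 ⟨_, ZFSet.mem_singleton.2 rfl, _, hv, rfl⟩
        exact absurd hpred (not_represented G (Mlvl_mono G (Nat.zero_le j) h0) hX)
      · -- u = pair (tag (k+1)) X', preds of u = X'
        have hXX' : X' = X := by
          apply ZFSet.ext
          intro z
          rw [← hpred z, hu, pred_new G hX']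
        rcases Nat.lt_or_ge k j with hkj | hkj
        · -- u ∈ Mlvl (k+1) ⊆ Mlvl j, contradiction
          have hu' : u ∈ Mlvl G j := Mlvl_mono G (by omega : k + 1 ≤ j)
            (hu ▸ ZFSet.mem_union.2 (Or.inr (ZFSet.mem_prod.2
              ⟨_, ZFSet.mem_singleton.2 rfl, _, hX', rfl⟩)) : u ∈ Mlvl G (k + 1))
          exact absurd hpred (not_represented G hu' hX)
        · rcases Nat.lt_or_ge j k with hjk | hjk
          · -- pair (tag (j+1)) X ∈ Mlvl (j+1) ⊆ Mlvl k has preds X = X', contra defic k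
            have hv' : ZFSet.pair (tag (j + 1)) X ∈ Mlvl G k :=
              Mlvl_mono G (by omega : j + 1 ≤ k)
                (ZFSet.mem_union.2 (Or.inr (ZFSet.mem_prod.2
                  ⟨_, ZFSet.mem_singleton.2 rfl, _, hX, rfl⟩)))
            exact absurd (fun z => by rw [pred_new G hX, ← hXX'])
              (not_represented G hv' hX')
          · have : k = j := by omega
            subst this
            rw [hu, hXX']
    · exact absurd hpred (not_represented G (Mlvl_mono G hjm hm) hX)
  rcases Mlvl_shape G hm₁ with ⟨u₁, hu₁, he₁⟩ | ⟨k₁, X₁, hk₁, hX₁, he₁⟩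
  · rcases Mlvl_shape G hm₂ with ⟨u₂, hu₂, he₂⟩ | ⟨k₂, X₂, hk₂, hX₂, he₂⟩
    · -- both base elements
      have pred0 : ∀ u, u ∈ G.M → ∀ z,
          (Eomega G z (ZFSet.pair (tag 0) u) ↔ ∃ a, G.E a u ∧ z = ZFSet.pair (tag 0) a) := by
        intro u hu z
        have hmem : ZFSet.pair (tag 0) u ∈ Mlvl G 0 :=
          ZFSet.mem_prod.2 ⟨_, ZFSet.mem_singleton.2 rfl, _, hu, rfl⟩
        rw [Eomega_iff_Elvl G hmem]
        constructor
        · rintro ⟨a, b, hE, hz, hb⟩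
          rw [← (ZFSet.pair_injective hb).2] at hE
          exact ⟨a, hE, hz⟩
        · rintro ⟨a, hE, hz⟩
          exact ⟨a, u, hE, hz, rfl⟩
      have hEiff : ∀ w, G.E w u₁ ↔ G.E w u₂ := by
        intro w
        constructor
        · intro hw
          have := (h (ZFSet.pair (tag 0) w)).1
            (he₁ ▸ (pred0 u₁ hu₁ _).2 ⟨w, hw, rfl⟩)
          obtain ⟨a, ha, hpa⟩ := (pred0 u₂ hu₂ _).1 (he₂ ▸ this)
          rwa [← (ZFSet.pair_injective hpa).2] at ha
        · intro hw
          have := (h (ZFSet.pair (tag 0) w)).2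
            (he₂ ▸ (pred0 u₂ hu₂ _).2 ⟨w, hw, rfl⟩)
          obtain ⟨a, ha, hpa⟩ := (pred0 u₁ hu₁ _).1 (he₁ ▸ this)
          rwa [← (ZFSet.pair_injective hpa).2] at ha
      rw [he₁, he₂, G.ext u₁ u₂ hu₁ hu₂ hEiff]
    · -- y₂ = pair (tag (k₂+1)) X₂; y₁ has same preds, so key gives y₁ = y₂
      rw [he₂] at h
      exact (key hX₂ ⟨m₁, hm₁⟩ (fun z => (h z).trans (pred_new G hX₂ z))).trans he₂.symm
  · rw [he₁] at h
    exact he₁.trans (key hX₁ ⟨m₂, hm₂⟩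
      (fun z => (h z).symm.trans (pred_new G hX₁ z))).symm

theorem represent {m : ℕ} {Y : ZFSet} (hY : Y ⊆ Mlvl G m) :
    ∃ P, P ∈ Mlvl G (m + 1) ∧ ∀ z, (Eomega G z P ↔ z ∈ Y) := by
  by_cases hd : Y ∈ defic (Mlvl G m) (Elvl G m)
  · exact ⟨ZFSet.pair (tag (m + 1)) Y,
      ZFSet.mem_union.2 (Or.inr (ZFSet.mem_prod.2
        ⟨_, ZFSet.mem_singleton.2 rfl, _, hd, rfl⟩)),
      pred_new G hd⟩
  · have hp : Y ∈ ZFSet.powerset (Mlvl G m) := ZFSet.mem_powerset.2 hY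
    have : ¬ ¬ ∃ y, y ∈ Mlvl G m ∧ ∀ z, z ∈ Mlvl G m → (z ∈ Y ↔ Elvl G m z y) := by
      intro hc
      exact hd (ZFSet.mem_sep.2 ⟨hp, hc⟩)
    obtain ⟨y, hy, hrep⟩ := not_not.1 this
    refine ⟨y, Mlvl_mono G (Nat.le_succ m) hy, fun z => ?_⟩
    rw [Eomega_iff_Elvl G hy]
    constructor
    · intro hE
      exact (hrep z (Elvl_dom G hE).1).2 hE
    · intro hz
      exact (hrep z (hY hz)).1 hz

end ExtDigraph

open ExtDigraph

/-- **Power Set in `𝕍_ω(G)`.** For every extensional digraph `G`, every `n < ω`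
and every `x ∈ M_n(G)`, there is `P ∈ M_{n+2}(G)` such that for all `z ∈ M_ω(G)`,
`z E_ω P` iff every `E_ω`-predecessor of `z` is an `E_ω`-predecessor of `x`. -/
theorem Vomega_powerset (G : ExtDigraph) (n : ℕ) (x : ZFSet) (hx : x ∈ Mlvl G n) :
    ∃ P, P ∈ Mlvl G (n + 2) ∧
      ∀ z, MemMomega G z →
        (Eomega G z P ↔ ∀ w, Eomega G w z → Eomega G w x) := by
  have predx : ∀ w, Eomega G w x → w ∈ Mlvl G n := by
    intro w hw
    exact (Elvl_dom G ((Eomega_iff_Elvl G hx w).1 hw)).1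
  set S : ZFSet := (Mlvl G (n + 1)).sep (fun z => ∀ w, Eomega G w z → Eomega G w x)
    with hS
  have hSsub : S ⊆ Mlvl G (n + 1) := fun z hz => (ZFSet.mem_sep.1 hz).1
  obtain ⟨P, hP, hPpred⟩ := represent G hSsub
  refine ⟨P, hP, fun z hz => ?_⟩
  rw [hPpred z]
  constructor
  · intro hzS
    exact (ZFSet.mem_sep.1 hzS).2
  · intro hprop
    set Y : ZFSet := (Mlvl G n).sep (fun w => Eomega G w z) with hY
    have hYsub : Y ⊆ Mlvl G n := fun w hw => (ZFSet.mem_sep.1 hw).1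
    have hYpred : ∀ w, Eomega G w z ↔ w ∈ Y := by
      intro w
      constructor
      · intro hw
        exact ZFSet.mem_sep.2 ⟨predx w (hprop w hw), hw⟩
      · intro hw
        exact (ZFSet.mem_sep.1 hw).2
    obtain ⟨y, hy, hypred⟩ := represent G hYsub
    have : z = y := ext_omega G hz ⟨n + 1, hy⟩
      (fun w => (hYpred w).trans (hypred w).symm)
    subst this
    exact ZFSet.mem_sep.2 ⟨hy, hprop⟩
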